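/- arXiv:1701.02819 — 4 statements merged into one kernel-verified Lean document; each statement's English description precedes it below -/
import Mathlib

section
/- Let V = {1,…,n} be a finite set, let 𝓗 be a finite hypergraph on V, and for each i ∈ V let Γ_i be an impartial game that is SG decreasing. Then for every position x = (x_1,…,x_n) of the 𝓗-combination Γ_𝓗 one has 𝓖_{Γ_𝓗}(x) = 𝓖_𝓗(𝓖_{Γ_1}(x_1),…,𝓖_{Γ_n}(x_n)), where 𝓖_𝓗 denotes the Sprague–Grundy function of the game NIM_𝓗. -/
/-- The minimum excludant of a set of natural numbers. -/
noncomputable def mex (S : Set ℕ) : ℕ := sInf {n : ℕ | n ∉ S}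

open Classical in
/-- The Sprague–Grundy function of the impartial game with move relation `move`
(meaningful when every play is finite, i.e. the reversed move relation is
well-founded): it satisfies `sgFun move x = mex {sgFun move y | move x y}`. -/
noncomputable def sgFun {X : Type*} (move : X → X → Prop) : X → ℕ :=
  if hwf : WellFounded (fun y x => move x y) then
    hwf.fix (fun x ih => mex {v : ℕ | ∃ (y : X) (h : move x y), ih y h = v})
  else fun _ => 0

open Classical in
/-- The Tetris function: the length of a longest play starting at `x`
(meaningful when every play is finite and the game is finitely branching):
it satisfies `tetrisFun move x = sup {tetrisFun move y + 1 | move x y}`. -/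
noncomputable def tetrisFun {X : Type*} (move : X → X → Prop) : X → ℕ :=
  if hwf : WellFounded (fun y x => move x y) then
    hwf.fix (fun x ih => sSup {v : ℕ | ∃ (y : X) (h : move x y), v = ih y h + 1})
  else fun _ => 0

/-- A game is SG decreasing if every move strictly decreases the SG value. -/
def SGDecreasing {X : Type*} (move : X → X → Prop) : Prop :=
  ∀ x y, move x y → sgFun move y < sgFun move x

/-- The move relation of the game `NIM_𝓗` on positions `ℕ^V`. -/
def nimMove {V : Type*} (𝓗 : Set (Finset V)) (x x' : V → ℕ) : Prop :=
  ∃ H ∈ 𝓗, (∀ i ∈ H, x' i < x i) ∧ ∀ i ∉ H, x' i = x i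

/-- A hypergraph is Tetris if `NIM_𝓗` is SG decreasing. -/
def IsTetrisHypergraph {V : Type*} (𝓗 : Set (Finset V)) : Prop :=
  SGDecreasing (nimMove 𝓗)

/-- The move relation of the `𝓗`-combination of the games `move i`. -/
def combMove {V : Type*} {X : V → Type*} (𝓗 : Set (Finset V))
    (move : ∀ i, X i → X i → Prop) (x x' : ∀ i, X i) : Prop :=
  ∃ H ∈ 𝓗, (∀ i ∈ H, move i (x i) (x' i)) ∧ ∀ i ∉ H, x' i = x i

/-- Condition (*): every nonempty induced subhypergraph has a hyperedge
intersecting all its hyperedges. -/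
def CondStar {V : Type*} [DecidableEq V] (𝓗 : Set (Finset V)) : Prop :=
  ∀ S : Finset V, (∃ H ∈ 𝓗, H ⊆ S) →
    ∃ H ∈ 𝓗, H ⊆ S ∧ ∀ H' ∈ 𝓗, H' ⊆ S → (H ∩ H').Nonempty

open Classical in
lemma sgFun_eq {X : Type*} {move : X → X → Prop}
    (h : WellFounded (fun y x => move x y)) (x : X) :
    sgFun move x = mex {v : ℕ | ∃ y, move x y ∧ sgFun move y = v} := by
  unfold sgFun
  rw [dif_pos h, h.fix_eq]
  congr 1
  ext v
  constructor
  · rintro ⟨y, hy, rfl⟩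
    exact ⟨y, hy, rfl⟩
  · rintro ⟨y, hy, rfl⟩
    exact ⟨y, hy, rfl⟩

lemma mem_of_lt_mex {S : Set ℕ} {v : ℕ} (h : v < mex S) : v ∈ S := by
  by_contra hv
  exact absurd (Nat.sInf_le hv) (not_le.mpr h)

theorem stmt0 {V : Type*} [Fintype V] {X : V → Type*}
    (𝓗 : Set (Finset V)) (hne : ∀ H ∈ 𝓗, H.Nonempty)
    (move : ∀ i, X i → X i → Prop)
    (hwf : ∀ i, WellFounded (fun y x => move i x y))
    (hfin : ∀ i x, {y | move i x y}.Finite)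
    (hdec : ∀ i, SGDecreasing (move i)) :
    ∀ x : ∀ i, X i,
      sgFun (combMove 𝓗 move) x
        = sgFun (nimMove 𝓗) (fun i => sgFun (move i) (x i)) := by
  classical
  have hwfc : WellFounded (fun y x => combMove 𝓗 move x y) := by
    have hsub : Subrelation (fun y x => combMove 𝓗 move x y)
        (InvImage (· < ·) (fun x : ∀ i, X i => ∑ i, sgFun (move i) (x i))) := by
      rintro y x ⟨H, hH, h1, h2⟩
      apply Finset.sum_lt_sum
      · intro i _
        by_cases hi : i ∈ H
        · exact (hdec i _ _ (h1 i hi)).le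
        · rw [h2 i hi]
      · obtain ⟨i, hi⟩ := hne H hH
        exact ⟨i, Finset.mem_univ i, hdec i _ _ (h1 i hi)⟩
    exact hsub.wf (InvImage.wf _ Nat.lt_wfRel.wf)
  have hwfn : WellFounded (fun y x => nimMove (V := V) 𝓗 x y) := by
    have hsub : Subrelation (fun y x => nimMove (V := V) 𝓗 x y)
        (InvImage (· < ·) (fun x : V → ℕ => ∑ i, x i)) := by
      rintro y x ⟨H, hH, h1, h2⟩
      apply Finset.sum_lt_sum
      · intro i _
        by_cases hi : i ∈ H
        · exact (h1 i hi).le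
        · rw [h2 i hi]
      · obtain ⟨i, hi⟩ := hne H hH
        exact ⟨i, Finset.mem_univ i, h1 i hi⟩
    exact hsub.wf (InvImage.wf _ Nat.lt_wfRel.wf)
  intro x
  induction x using hwfc.induction with
  | _ x IH =>
    rw [sgFun_eq hwfc, sgFun_eq hwfn]
    congr 1
    ext v
    simp only [Set.mem_setOf_eq]
    constructor
    · rintro ⟨y, hy, rfl⟩
      refine ⟨fun i => sgFun (move i) (y i), ?_, (IH y hy).symm⟩
      obtain ⟨H, hH, h1, h2⟩ := hy
      exact ⟨H, hH, fun i hi => hdec i _ _ (h1 i hi), fun i hi => by simp only []; rw [h2 i hi]⟩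
    · rintro ⟨w, hw, rfl⟩
      obtain ⟨H, hH, h1, h2⟩ := hw
      have hch : ∀ i ∈ H, ∃ y, move i (x i) y ∧ sgFun (move i) y = w i := by
        intro i hi
        have h3 : w i < mex {v : ℕ | ∃ y, move i (x i) y ∧ sgFun (move i) y = v} := by
          rw [← sgFun_eq (hwf i)]; exact h1 i hi
        exact mem_of_lt_mex h3
      choose y hy1 hy2 using hch
      set x' : ∀ i, X i := fun i => if h : i ∈ H then y i h else x i with hx'
      have hmv : combMove 𝓗 move x x' := by
        refine ⟨H, hH, fun i hi => ?_, fun i hi => ?_⟩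
        · simp only [hx', dif_pos hi]; exact hy1 i hi
        · simp only [hx', dif_neg hi]
      have hgx' : (fun i => sgFun (move i) (x' i)) = w := by
        funext i
        by_cases hi : i ∈ H
        · simp only [hx', dif_pos hi]; exact hy2 i hi
        · simp only [hx', dif_neg hi]; exact (h2 i hi).symm
      exact ⟨x', hmv, by rw [IH x' hmv, hgx']⟩
end

section
/- Let 𝓗 be a finite hypergraph on a finite set V (all hyperedges nonempty). Then {x ∈ ℕ^V : 𝓣_𝓗(x) = 0} = {x ∈ ℕ^V : 𝓖_𝓗(x) = 0} if and only if 𝓗 satisfies condition (*): for every S ⊆ V with 𝓗_S ≠ ∅ there exists H ∈ 𝓗_S such that H ∩ H' ≠ ∅ for all H' ∈ 𝓗_S. -/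
/-!
In a game with a strictly decreasing `ℕ`-valued potential (for `NIM_𝓗`, the sum of the
coordinates), the Tetris value vanishes exactly at terminal positions, and a position has SG
value `0` iff none of its options does. Hence the two zero sets agree iff every non-terminal
position has a move to a terminal one. In `NIM_𝓗` a position is terminal iff no hyperedge lies
inside its support `S`, and emptying a hyperedge `H ⊆ S` leaves a terminal position iff `H`
meets every hyperedge inside `S`; testing on the `0/1` indicator of `S` shows that this is
exactly condition (*).
-/

lemma mex_eq_zero_iff {S : Set ℕ} (hS : ∃ n, n ∉ S) : mex S = 0 ↔ 0 ∉ S := by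
  have hne : {n | n ∉ S} ≠ ∅ := Set.nonempty_iff_ne_empty.mp hS
  rw [mex, Nat.sInf_eq_zero, or_iff_left hne]
  rfl

def IsTerminalPosition {X : Type*} (move : X → X → Prop) (x : X) : Prop :=
  ∀ y, ¬ move x y

section Potential

variable {X : Type*} {move : X → X → Prop}

lemma sgFun_eq_mex (hwf : WellFounded (fun y x => move x y)) (x : X) :
    sgFun move x = mex {v : ℕ | ∃ y, move x y ∧ sgFun move y = v} := by
  rw [sgFun, dif_pos hwf, WellFounded.fix_eq]
  simp only [exists_prop]

lemma tetrisFun_eq_sSup (hwf : WellFounded (fun y x => move x y)) (x : X) :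
    tetrisFun move x = sSup {v : ℕ | ∃ y, move x y ∧ v = tetrisFun move y + 1} := by
  rw [tetrisFun, dif_pos hwf, WellFounded.fix_eq]
  simp only [exists_prop]

-- The potential `f` also bounds `sgFun` and `tetrisFun`, which rules out the junk values
-- `mex Set.univ = 0` and `sSup` of an unbounded set `= 0`.
variable {f : X → ℕ}

lemma wellFounded_of_potential (hf : ∀ x y, move x y → f y < f x) :
    WellFounded (fun y x => move x y) :=
  Subrelation.wf (fun h => hf _ _ h) (InvImage.wf f wellFounded_lt)

lemma sgFun_le_potential (hf : ∀ x y, move x y → f y < f x) (x : X) :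
    sgFun move x ≤ f x := by
  induction x using (wellFounded_of_potential hf).induction with
  | _ x ih =>
    rw [sgFun_eq_mex (wellFounded_of_potential hf)]
    refine Nat.sInf_le fun ⟨y, hy, h⟩ => ?_
    exact ((ih y hy).trans_lt (hf x y hy)).ne h

lemma tetrisFun_le_potential (hf : ∀ x y, move x y → f y < f x) (x : X) :
    tetrisFun move x ≤ f x := by
  induction x using (wellFounded_of_potential hf).induction with
  | _ x ih =>
    rw [tetrisFun_eq_sSup (wellFounded_of_potential hf)]
    refine csSup_le' fun v ⟨y, hy, hv⟩ => ?_
    exact hv ▸ (ih y hy).trans_lt (hf x y hy)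

lemma tetrisFun_eq_zero_iff (hf : ∀ x y, move x y → f y < f x) {x : X} :
    tetrisFun move x = 0 ↔ IsTerminalPosition move x := by
  rw [tetrisFun_eq_sSup (wellFounded_of_potential hf)]
  constructor
  · intro h y hy
    have hbdd : BddAbove {v : ℕ | ∃ y, move x y ∧ v = tetrisFun move y + 1} :=
      ⟨f x, fun v ⟨y, hy, hv⟩ => hv ▸ (tetrisFun_le_potential hf y).trans_lt (hf x y hy)⟩
    have := le_csSup hbdd ⟨y, hy, rfl⟩
    omega
  · intro h
    have hempty : {v : ℕ | ∃ y, move x y ∧ v = tetrisFun move y + 1} = ∅ :=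
      Set.eq_empty_of_forall_notMem fun _ ⟨y, hy, _⟩ => h y hy
    rw [hempty, csSup_empty]
    rfl

lemma sgFun_eq_zero_iff (hf : ∀ x y, move x y → f y < f x) {x : X} :
    sgFun move x = 0 ↔ ∀ y, move x y → sgFun move y ≠ 0 := by
  rw [sgFun_eq_mex (wellFounded_of_potential hf), mex_eq_zero_iff]
  · simp
  · refine ⟨f x, fun ⟨y, hy, h⟩ => ?_⟩
    exact ((sgFun_le_potential hf y).trans_lt (hf x y hy)).ne h

lemma setOf_tetrisFun_eq_zero_eq_setOf_sgFun_eq_zero_iff (hf : ∀ x y, move x y → f y < f x) :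
    {x | tetrisFun move x = 0} = {x | sgFun move x = 0} ↔
      ∀ x, ¬IsTerminalPosition move x → ∃ y, move x y ∧ IsTerminalPosition move y := by
  have hterm_sg {x : X} (hx : IsTerminalPosition move x) : sgFun move x = 0 :=
    (sgFun_eq_zero_iff hf).mpr fun y hy => absurd hy (hx y)
  simp only [Set.ext_iff, Set.mem_ofPred_eq, tetrisFun_eq_zero_iff hf]
  constructor
  · intro h x hx
    have hsg : sgFun move x ≠ 0 := fun hsg => hx ((h x).mpr hsg)
    rw [Ne, sgFun_eq_zero_iff hf] at hsg
    push Not at hsg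
    obtain ⟨y, hy, hsgy⟩ := hsg
    exact ⟨y, hy, (h y).mpr hsgy⟩
  · refine fun h x => ⟨hterm_sg, fun hsg => ?_⟩
    by_contra hx
    obtain ⟨y, hy, hyterm⟩ := h x hx
    exact (sgFun_eq_zero_iff hf).mp hsg y hy (hterm_sg hyterm)

end Potential

section Nim

variable {V : Type*} [DecidableEq V] {𝓗 : Set (Finset V)}

lemma nimMove_sum_lt [Fintype V] (hne : ∀ H ∈ 𝓗, H.Nonempty) {x y : V → ℕ}
    (h : nimMove 𝓗 x y) : ∑ i, y i < ∑ i, x i := by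
  obtain ⟨H, hH, hlt, heq⟩ := h
  obtain ⟨j, hj⟩ := hne H hH
  refine Finset.sum_lt_sum (fun i _ => ?_) ⟨j, Finset.mem_univ j, hlt j hj⟩
  by_cases hi : i ∈ H
  · exact (hlt i hi).le
  · exact (heq i hi).le

lemma nimMove_clear {x : V → ℕ} {H : Finset V} (hH : H ∈ 𝓗) (hx : ∀ i ∈ H, x i ≠ 0) :
    nimMove 𝓗 x (fun i => if i ∈ H then 0 else x i) :=
  ⟨H, hH, fun i hi => by simpa [hi] using Nat.pos_of_ne_zero (hx i hi),
    fun i hi => by simp [hi]⟩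

lemma isTerminalPosition_nimMove_iff {x : V → ℕ} :
    IsTerminalPosition (nimMove 𝓗) x ↔ ∀ H ∈ 𝓗, ∃ i ∈ H, x i = 0 := by
  constructor
  · intro h H hH
    by_contra! hx
    exact h _ (nimMove_clear hH hx)
  · rintro h y ⟨H, hH, hlt, -⟩
    obtain ⟨i, hi, hxi⟩ := h H hH
    exact Nat.not_lt_zero _ (hxi ▸ hlt i hi)

lemma condStar_of_forall_exists_nimMove_isTerminalPosition
    (h : ∀ x, ¬IsTerminalPosition (nimMove 𝓗) x →
      ∃ y, nimMove 𝓗 x y ∧ IsTerminalPosition (nimMove 𝓗) y) :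
    CondStar 𝓗 := by
  rintro S ⟨H₀, hH₀, hH₀S⟩
  set x : V → ℕ := fun i => if i ∈ S then 1 else 0
  have hx : ¬IsTerminalPosition (nimMove 𝓗) x := by
    rw [isTerminalPosition_nimMove_iff]
    push Not
    exact ⟨H₀, hH₀, fun i hi => by simp [x, hH₀S hi]⟩
  obtain ⟨y, ⟨H, hH, hlt, heq⟩, hy⟩ := h x hx
  have hHS : H ⊆ S := fun i hi => by
    by_contra hiS
    simpa [x, hiS] using hlt i hi
  refine ⟨H, hH, hHS, fun H' hH' hH'S => ?_⟩
  by_contra hdisj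
  obtain ⟨i, hi, hyi⟩ := isTerminalPosition_nimMove_iff.mp hy H' hH'
  have hiH : i ∉ H := fun hiH => hdisj ⟨i, Finset.mem_inter.mpr ⟨hiH, hi⟩⟩
  simp [heq i hiH, x, hH'S hi] at hyi

lemma exists_nimMove_isTerminalPosition_of_condStar [Fintype V] (hstar : CondStar 𝓗)
    {x : V → ℕ} (hx : ¬IsTerminalPosition (nimMove 𝓗) x) :
    ∃ y, nimMove 𝓗 x y ∧ IsTerminalPosition (nimMove 𝓗) y := by
  rw [isTerminalPosition_nimMove_iff] at hx
  push Not at hx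
  obtain ⟨H₀, hH₀, hH₀x⟩ := hx
  set S := Finset.univ.filter (x · ≠ 0)
  obtain ⟨H, hH, hHS, hmeet⟩ :=
    hstar S ⟨H₀, hH₀, fun i hi => by simpa [S] using hH₀x i hi⟩
  have hHx : ∀ i ∈ H, x i ≠ 0 := fun i hi => by simpa [S] using hHS hi
  refine ⟨_, nimMove_clear hH hHx, isTerminalPosition_nimMove_iff.mpr fun H' hH' => ?_⟩
  by_contra! hH'y
  have hH'S : H' ⊆ S := fun i hi => by
    have := hH'y i hi
    simp only [S, Finset.mem_filter, Finset.mem_univ, true_and]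
    intro hxi
    simp [hxi] at this
  obtain ⟨i, hi⟩ := hmeet H' hH' hH'S
  rw [Finset.mem_inter] at hi
  simpa [hi.1] using hH'y i hi.2

end Nim

theorem stmt6 {V : Type*} [Fintype V] [DecidableEq V]
    (𝓗 : Set (Finset V)) (hne : ∀ H ∈ 𝓗, H.Nonempty) :
    {x : V → ℕ | tetrisFun (nimMove 𝓗) x = 0}
      = {x : V → ℕ | sgFun (nimMove 𝓗) x = 0} ↔ CondStar 𝓗 := by
  rw [setOf_tetrisFun_eq_zero_eq_setOf_sgFun_eq_zero_iff fun x y => nimMove_sum_lt hne]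
  exact ⟨condStar_of_forall_exists_nimMove_isTerminalPosition,
    fun hstar _ => exists_nimMove_isTerminalPosition_of_condStar hstar⟩
end

section
/- Let 𝓗 be a finite hypergraph on a finite set V with dim(𝓗) = 2 (every hyperedge has at most 2 elements) and possessing at least one hyperedge of size exactly 2. Then 𝓗 satisfies condition (*) if and only if there exists a single hyperedge H ∈ 𝓗 such that H ∩ H' ≠ ∅ for all H' ∈ 𝓗. -/
theorem stmt9 {V : Type*} [Fintype V] [DecidableEq V]
    (𝓗 : Set (Finset V)) (hne : ∀ H ∈ 𝓗, H.Nonempty)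
    (hdim : ∀ H ∈ 𝓗, H.card ≤ 2)
    (hex : ∃ H ∈ 𝓗, H.card = 2) :
    CondStar 𝓗 ↔ ∃ H ∈ 𝓗, ∀ H' ∈ 𝓗, (H ∩ H').Nonempty := by
  constructor
  · intro hcs
    obtain ⟨H, hH, _⟩ := hex
    obtain ⟨H', hH', _, hint⟩ := hcs Finset.univ ⟨H, hH, Finset.subset_univ _⟩
    exact ⟨H', hH', fun K hK => hint K hK (Finset.subset_univ _)⟩
  · rintro ⟨H₀, hH₀, hint⟩ S ⟨H, hH, hHS⟩
    by_cases hsub : H₀ ⊆ S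
    · exact ⟨H₀, hH₀, hsub, fun H' hH' _ => hint H' hH'⟩
    · obtain ⟨c, hc⟩ := hint H hH
      rw [Finset.mem_inter] at hc
      have hcS : c ∈ S := hHS hc.2
      obtain ⟨e, heH, heS⟩ := Finset.not_subset.1 hsub
      have key : ∀ d ∈ H₀, d ∈ S → d = c := by
        intro d hdH hdS
        by_contra hdc
        have hde : d ≠ e := fun h => heS (h ▸ hdS)
        have hce : c ≠ e := fun h => heS (h ▸ hcS)
        have hsub3 : ({d, c, e} : Finset V) ⊆ H₀ := by
          intro x hx
          simp only [Finset.mem_insert, Finset.mem_singleton] at hx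
          rcases hx with rfl | rfl | rfl
          · exact hdH
          · exact hc.1
          · exact heH
        have h3 : ({d, c, e} : Finset V).card = 3 := by
          rw [Finset.card_insert_of_notMem (by simp [hdc, hde]),
            Finset.card_insert_of_notMem (by simp [hce]), Finset.card_singleton]
        have := Finset.card_le_card hsub3
        have := hdim H₀ hH₀
        omega
      refine ⟨H, hH, hHS, fun H' hH' hH'S => ?_⟩
      obtain ⟨d, hd⟩ := hint H' hH'
      rw [Finset.mem_inter] at hd
      have hdc : d = c := key d hd.1 (hH'S hd.2)
      exact ⟨c, Finset.mem_inter.2 ⟨hc.2, hdc ▸ hd.2⟩⟩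
end

section
/- Let 𝓗 be a finite hypergraph on a finite set V, let H ∈ 𝓗, and let x ∈ ℕ^V satisfy x_i ≥ 1 for all i ∈ H. Then for every integer v with 𝓣_𝓗(x^{f(H)}) ≤ v ≤ 𝓣_𝓗(x^{s(H)}) there exists an H-move x → x' in NIM_𝓗 such that 𝓣_𝓗(x') = v. -/
/-- The result of the slow `H`-move: decrease every coordinate in `H` by one. -/
def slowMove {V : Type*} [DecidableEq V] (H : Finset V) (x : V → ℕ) : V → ℕ :=
  fun i => if i ∈ H then x i - 1 else x i

/-- The result of the fast `H`-move: decrease every coordinate in `H` to zero. -/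
def fastMove {V : Type*} [DecidableEq V] (H : Finset V) (x : V → ℕ) : V → ℕ :=
  fun i => if i ∈ H then 0 else x i

section MyAux

variable {V : Type*} [Fintype V] [DecidableEq V] (𝓗 : Set (Finset V))

lemma mySum_lt_of_move (hne : ∀ H ∈ 𝓗, H.Nonempty) {x y : V → ℕ}
    (h : nimMove 𝓗 x y) : ∑ i, y i < ∑ i, x i := by
  obtain ⟨H, hH, hlt, heq⟩ := h
  apply Finset.sum_lt_sum
  · intro i _
    by_cases hi : i ∈ H
    · exact (hlt i hi).le
    · exact (heq i hi).le
  · obtain ⟨i, hi⟩ := hne H hH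
    exact ⟨i, Finset.mem_univ i, hlt i hi⟩

lemma myNim_wf (hne : ∀ H ∈ 𝓗, H.Nonempty) :
    WellFounded (fun y x => nimMove 𝓗 x y) := by
  have hw : WellFounded (InvImage (· < ·) (fun x : V → ℕ => ∑ i, x i)) :=
    InvImage.wf _ Nat.lt_wfRel.wf
  exact Subrelation.wf (fun {y x} h => mySum_lt_of_move 𝓗 hne h) hw

lemma myTetris_eq {X : Type*} (move : X → X → Prop)
    (hwf : WellFounded (fun y x => move x y)) (x : X) :
    tetrisFun move x = sSup {v : ℕ | ∃ y, move x y ∧ v = tetrisFun move y + 1} := by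
  have h1 : tetrisFun move = hwf.fix
      (fun x ih => sSup {v : ℕ | ∃ (y : X) (h : move x y), v = ih y h + 1}) := by
    unfold tetrisFun
    rw [dif_pos hwf]
  rw [h1, WellFounded.fix_eq]
  congr 1
  ext v
  simp only [Set.mem_setOf_eq]
  constructor
  · rintro ⟨y, h, rfl⟩; exact ⟨y, h, rfl⟩
  · rintro ⟨y, h, rfl⟩; exact ⟨y, h, rfl⟩

lemma myTetris_le_sum (hne : ∀ H ∈ 𝓗, H.Nonempty) : ∀ x : V → ℕ, tetrisFun (nimMove 𝓗) x ≤ ∑ i, x i := by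
  intro x
  refine (myNim_wf 𝓗 hne).induction
    (C := fun x => tetrisFun (nimMove 𝓗) x ≤ ∑ i, x i) x ?_
  intro x ih
  rw [myTetris_eq _ (myNim_wf 𝓗 hne)]
  rcases Set.eq_empty_or_nonempty
    {v : ℕ | ∃ y, nimMove 𝓗 x y ∧ v = tetrisFun (nimMove 𝓗) y + 1} with h | h
  · rw [h, csSup_empty]; exact bot_le
  · apply csSup_le h
    rintro v ⟨y, hm, rfl⟩
    have h1 := mySum_lt_of_move 𝓗 hne hm
    have h2 := ih y hm
    omega

lemma myTetris_bdd (hne : ∀ H ∈ 𝓗, H.Nonempty) (x : V → ℕ) :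
    BddAbove {v : ℕ | ∃ y, nimMove 𝓗 x y ∧ v = tetrisFun (nimMove 𝓗) y + 1} := by
  refine ⟨∑ i, x i, ?_⟩
  rintro v ⟨y, hm, rfl⟩
  have h1 := mySum_lt_of_move 𝓗 hne hm
  have h2 := myTetris_le_sum 𝓗 hne y
  omega

lemma myLe_of_move (hne : ∀ H ∈ 𝓗, H.Nonempty) {x y : V → ℕ} (h : nimMove 𝓗 x y) :
    tetrisFun (nimMove 𝓗) y + 1 ≤ tetrisFun (nimMove 𝓗) x := by
  rw [myTetris_eq _ (myNim_wf 𝓗 hne) x]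
  exact le_csSup (myTetris_bdd 𝓗 hne x) ⟨y, h, rfl⟩

lemma myExists_max_move (hne : ∀ H ∈ 𝓗, H.Nonempty) {x : V → ℕ} (h : tetrisFun (nimMove 𝓗) x ≠ 0) :
    ∃ y, nimMove 𝓗 x y ∧ tetrisFun (nimMove 𝓗) x = tetrisFun (nimMove 𝓗) y + 1 := by
  have he := myTetris_eq _ (myNim_wf 𝓗 hne) x
  rcases Set.eq_empty_or_nonempty
    {v : ℕ | ∃ y, nimMove 𝓗 x y ∧ v = tetrisFun (nimMove 𝓗) y + 1} with hS | hS
  · rw [he, hS, csSup_empty] at h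
    simp at h
  · have hmem := Nat.sSup_mem hS (myTetris_bdd 𝓗 hne x)
    rw [← he] at hmem
    exact hmem

lemma myTetris_mono (hne : ∀ H ∈ 𝓗, H.Nonempty) : ∀ x y : V → ℕ, (∀ i, x i ≤ y i) →
    tetrisFun (nimMove 𝓗) x ≤ tetrisFun (nimMove 𝓗) y := by
  intro x
  refine (myNim_wf 𝓗 hne).induction
    (C := fun x => ∀ y, (∀ i, x i ≤ y i) →
      tetrisFun (nimMove 𝓗) x ≤ tetrisFun (nimMove 𝓗) y) x ?_
  intro x ih y hxy
  by_cases h0 : tetrisFun (nimMove 𝓗) x = 0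
  · omega
  obtain ⟨x', hm, heq⟩ := myExists_max_move 𝓗 hne h0
  obtain ⟨H, hH, hlt, hoff⟩ := hm
  set y' : V → ℕ := fun j => if j ∈ H then x' j else y j with hy'
  have hmy : nimMove 𝓗 y y' := by
    refine ⟨H, hH, fun i hi => ?_, fun i hi => ?_⟩
    · simp only [hy', if_pos hi]
      exact lt_of_lt_of_le (hlt i hi) (hxy i)
    · simp only [hy', if_neg hi]
  have hle : ∀ i, x' i ≤ y' i := by
    intro i
    by_cases hi : i ∈ H
    · simp only [hy', if_pos hi]
      exact le_rfl
    · simp only [hy', if_neg hi]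
      rw [hoff i hi]
      exact hxy i
  have h1 := ih x' ⟨H, hH, hlt, hoff⟩ y' hle
  have h2 := myLe_of_move 𝓗 hne hmy
  omega

lemma myTetris_step (hne : ∀ H ∈ 𝓗, H.Nonempty) : ∀ p : V → ℕ, ∀ x : V → ℕ, ∀ i : V,
    p = Function.update x i (x i + 1) →
    tetrisFun (nimMove 𝓗) p ≤ tetrisFun (nimMove 𝓗) x + 1 := by
  intro p
  refine (myNim_wf 𝓗 hne).induction
    (C := fun p => ∀ x i, p = Function.update x i (x i + 1) →
      tetrisFun (nimMove 𝓗) p ≤ tetrisFun (nimMove 𝓗) x + 1) p ?_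
  intro p ih x i hp
  by_cases h0 : tetrisFun (nimMove 𝓗) p = 0
  · omega
  obtain ⟨z, hmz, heq⟩ := myExists_max_move 𝓗 hne h0
  obtain ⟨H', hH', hlt, hoff⟩ := hmz
  by_cases hiH : i ∈ H'
  · -- z ≤ x pointwise, use monotonicity
    have hzx : ∀ j, z j ≤ x j := by
      intro j
      by_cases hj : j ∈ H'
      · have h := hlt j hj
        by_cases hji : j = i
        · subst hji
          rw [hp, Function.update_self] at h
          omega
        · rw [hp, Function.update_of_ne hji] at h
          omega
      · have h := hoff j hj
        have hji : j ≠ i := fun hh => hj (hh ▸ hiH)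
        rw [hp, Function.update_of_ne hji] at h
        omega
    have hmono := myTetris_mono 𝓗 hne z x hzx
    omega
  · -- i ∉ H'
    have hzi : z i = x i + 1 := by
      have h := hoff i hiH
      rw [hp, Function.update_self] at h
      exact h
    have hwi : Function.update z i (x i) i = x i := Function.update_self _ _ _
    have hmw : nimMove 𝓗 x (Function.update z i (x i)) := by
      refine ⟨H', hH', fun j hj => ?_, fun j hj => ?_⟩
      · have hji : j ≠ i := fun hh => hiH (hh ▸ hj)
        rw [Function.update_of_ne hji]
        have h := hlt j hj
        rw [hp, Function.update_of_ne hji] at h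
        exact h
      · by_cases hji : j = i
        · subst hji
          exact hwi
        · rw [Function.update_of_ne hji]
          have h := hoff j hj
          rw [hp, Function.update_of_ne hji] at h
          exact h
    have hz : z = Function.update (Function.update z i (x i)) i
        ((Function.update z i (x i)) i + 1) := by
      funext j
      by_cases hji : j = i
      · subst hji
        rw [Function.update_self, hwi, hzi]
      · rw [Function.update_of_ne hji, Function.update_of_ne hji]
    have h1 := ih z ⟨H', hH', hlt, hoff⟩ (Function.update z i (x i)) i hz
    have h2 := myLe_of_move 𝓗 hne hmw
    omega

lemma myIvt1 (hne : ∀ H ∈ 𝓗, H.Nonempty) (y : V → ℕ) (i : V) (v : ℕ) :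
    ∀ d a : ℕ, tetrisFun (nimMove 𝓗) (Function.update y i a) ≤ v →
      v ≤ tetrisFun (nimMove 𝓗) (Function.update y i (a + d)) →
      ∃ c, c ≤ a + d ∧ tetrisFun (nimMove 𝓗) (Function.update y i c) = v := by
  intro d
  induction d with
  | zero =>
    intro a h1 h2
    exact ⟨a, Nat.le_refl _, le_antisymm h1 h2⟩
  | succ d ihd =>
    intro a h1 h2
    by_cases hle : v ≤ tetrisFun (nimMove 𝓗) (Function.update y i (a + d))
    · obtain ⟨c, hc, hcv⟩ := ihd a h1 hle
      exact ⟨c, by omega, hcv⟩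
    · push_neg at hle
      have heqq : Function.update y i (a + d + 1) =
          Function.update (Function.update y i (a + d)) i
            ((Function.update y i (a + d)) i + 1) := by
        rw [Function.update_idem, Function.update_self]
      have hstep := myTetris_step 𝓗 hne (Function.update y i (a + d + 1))
        (Function.update y i (a + d)) i heqq
      have h2' : v ≤ tetrisFun (nimMove 𝓗) (Function.update y i (a + d + 1)) := h2
      exact ⟨a + d + 1, by omega, by omega⟩

end MyAux

theorem stmt10 {V : Type*} [Fintype V] [DecidableEq V]
    (𝓗 : Set (Finset V)) (hne : ∀ H ∈ 𝓗, H.Nonempty)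
    (H : Finset V) (hH : H ∈ 𝓗)
    (x : V → ℕ) (hx : ∀ i ∈ H, 1 ≤ x i) :
    ∀ v : ℕ, tetrisFun (nimMove 𝓗) (fastMove H x) ≤ v →
      v ≤ tetrisFun (nimMove 𝓗) (slowMove H x) →
      ∃ x' : V → ℕ, (∀ i ∈ H, x' i < x i) ∧ (∀ i ∉ H, x' i = x i) ∧
        tetrisFun (nimMove 𝓗) x' = v := by
  have key : ∀ S : Finset V, S ⊆ H → ∀ v : ℕ,
      tetrisFun (nimMove 𝓗) (fastMove H x) ≤ v →
      v ≤ tetrisFun (nimMove 𝓗) (fun i => if i ∈ S then x i - 1 else fastMove H x i) →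
      ∃ x' : V → ℕ, (∀ i ∈ H, x' i < x i) ∧ (∀ i ∉ H, x' i = x i) ∧
        tetrisFun (nimMove 𝓗) x' = v := by
    intro S
    induction S using Finset.induction with
    | empty =>
      intro _ v h1 h2
      have hemp : (fun i => if i ∈ (∅ : Finset V) then x i - 1 else fastMove H x i)
          = fastMove H x := by
        funext i; simp
      rw [hemp] at h2
      refine ⟨fastMove H x, fun i hi => ?_, fun i hi => ?_, le_antisymm h1 h2⟩
      · simp only [fastMove, if_pos hi]
        exact hx i hi
      · simp only [fastMove, if_neg hi]
    | @insert a S ha ihS =>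
      intro hsub v h1 h2
      have hSsub : S ⊆ H := fun j hj => hsub (Finset.mem_insert_of_mem hj)
      have haH : a ∈ H := hsub (Finset.mem_insert_self a S)
      set m : V → ℕ := fun i => if i ∈ S then x i - 1 else fastMove H x i with hm
      by_cases hle : v ≤ tetrisFun (nimMove 𝓗) m
      · exact ihS hSsub v h1 hle
      push_neg at hle
      have hm0 : Function.update m a 0 = m := by
        funext j
        by_cases hja : j = a
        · subst hja
          rw [Function.update_self, hm]
          simp only [if_neg ha, fastMove, if_pos haH]
        · rw [Function.update_of_ne hja]
      have hmi : Function.update m a (0 + (x a - 1)) =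
          (fun i => if i ∈ insert a S then x i - 1 else fastMove H x i) := by
        funext j
        by_cases hja : j = a
        · subst hja
          rw [Function.update_self]
          simp only [Finset.mem_insert_self, if_pos]
          omega
        · rw [Function.update_of_ne hja, hm]
          have : j ∈ insert a S ↔ j ∈ S := by
            simp [Finset.mem_insert, hja]
          simp only [this]
      obtain ⟨c, hc, hcv⟩ := myIvt1 𝓗 hne m a v (x a - 1) 0
        (by rw [hm0]; exact hle.le) (by rw [hmi]; exact h2)
      refine ⟨Function.update m a c, fun i hi => ?_, fun i hi => ?_, hcv⟩
      · by_cases hia : i = a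
        · subst hia
          rw [Function.update_self]
          have := hx i hi
          omega
        · rw [Function.update_of_ne hia, hm]
          have hxi := hx i hi
          by_cases hiS : i ∈ S
          · simp only [if_pos hiS]; omega
          · simp only [if_neg hiS, fastMove, if_pos hi]; omega
      · have hia : i ≠ a := fun hh => hi (hh ▸ haH)
        rw [Function.update_of_ne hia, hm]
        simp only [if_neg (fun hh => hi (hSsub hh)), fastMove, if_neg hi]
  intro v h1 h2
  have hslow : (fun i => if i ∈ H then x i - 1 else fastMove H x i) = slowMove H x := by
    funext i
    by_cases hi : i ∈ H
    · simp [slowMove, hi]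
    · simp [slowMove, fastMove, hi]
  exact key H (Finset.Subset.refl H) v h1 (by rw [hslow]; exact h2)
end
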